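/- arXiv:1510.02132 — 2 statements merged into one kernel-verified Lean document; each statement's English description precedes it below -/
import Mathlib

section
/- Suppose a necklace of k beads is divided among n players with binary preferences, where each bead is worth exactly 0 or 1 to each player. Then there exists an allocation of the necklace into n contiguous intervals using n−1 cuts that is 1-envy-free. -/
/-- Discrete value to a player (with bead-valuations `v : Fin k → ℝ`) of the `j`-th
interval of beads in the division given by the integer cutset `c`. -/
noncomputable def pieceVal {k : ℕ} (v : Fin k → ℝ) (c : ℕ → ℕ) (j : ℕ) : ℝ :=
  ∑ b : Fin k, if c j ≤ (b : ℕ) ∧ (b : ℕ) < c (j + 1) then v b else 0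

/-- Value of the subinterval `[a, b]` of the associated continuous cake `[0, k]`,
obtained by spreading the value of each bead uniformly over a unit interval. -/
noncomputable def contVal {k : ℕ} (v : Fin k → ℝ) (a b : ℝ) : ℝ :=
  ∑ i : Fin k, v i * max 0 (min b ((i : ℝ) + 1) - max a (i : ℝ))

lemma contVal_mono_right {k : ℕ} (v : Fin k → ℝ) (hv0 : ∀ i, 0 ≤ v i)
    (a b b' : ℝ) (h : b ≤ b') : contVal v a b ≤ contVal v a b' := by
  apply Finset.sum_le_sum
  intro i _
  apply mul_le_mul_of_nonneg_left _ (hv0 i)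
  exact max_le_max le_rfl (sub_le_sub_right (min_le_min h le_rfl) _)

lemma contVal_anti_left {k : ℕ} (v : Fin k → ℝ) (hv0 : ∀ i, 0 ≤ v i)
    (a a' b : ℝ) (h : a' ≤ a) : contVal v a b ≤ contVal v a' b := by
  apply Finset.sum_le_sum
  intro i _
  apply mul_le_mul_of_nonneg_left _ (hv0 i)
  exact max_le_max le_rfl (sub_le_sub_left (max_le_max h le_rfl) _)

lemma pieceVal_eq_contVal {k : ℕ} (v : Fin k → ℝ) (c : ℕ → ℕ) (j : ℕ) :
    pieceVal v c j = contVal v (c j) (c (j + 1)) := by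
  unfold pieceVal contVal
  apply Finset.sum_congr rfl
  intro b _
  by_cases h : c j ≤ (b : ℕ) ∧ (b : ℕ) < c (j + 1)
  · obtain ⟨h1, h2⟩ := h
    have h1' : ((c j : ℕ) : ℝ) ≤ (b : ℕ) := by exact_mod_cast h1
    have h2' : ((b : ℕ) : ℝ) + 1 ≤ (c (j+1) : ℕ) := by exact_mod_cast h2
    rw [if_pos ⟨h1, h2⟩]
    rw [min_eq_right h2', max_eq_right h1']
    rw [max_eq_right (by linarith)]
    ring
  · rw [if_neg h]
    rcases Nat.lt_or_ge (b : ℕ) (c j) with hb | hb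
    · have : ((b:ℕ):ℝ) + 1 ≤ (c j : ℕ) := by exact_mod_cast hb
      have hm : min ((c (j+1):ℕ):ℝ) ((b:ℕ) + 1) - max ((c j:ℕ):ℝ) (b:ℕ) ≤ 0 := by
        have := min_le_right ((c (j+1):ℕ):ℝ) (((b:ℕ):ℝ) + 1)
        have := le_max_left ((c j:ℕ):ℝ) ((b:ℕ):ℝ)
        linarith
      rw [max_eq_left hm, mul_zero]
    · have hb2 : c (j+1) ≤ (b : ℕ) := by omega
      have : ((c (j+1):ℕ):ℝ) ≤ ((b:ℕ):ℝ) := by exact_mod_cast hb2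
      have hm : min ((c (j+1):ℕ):ℝ) ((b:ℕ) + 1) - max ((c j:ℕ):ℝ) (b:ℕ) ≤ 0 := by
        have := min_le_left ((c (j+1):ℕ):ℝ) (((b:ℕ):ℝ) + 1)
        have := le_max_right ((c j:ℕ):ℝ) ((b:ℕ):ℝ)
        linarith
      rw [max_eq_left hm, mul_zero]

lemma pieceVal_int {k : ℕ} (v : Fin k → ℝ) (hbin : ∀ b, v b = 0 ∨ v b = 1)
    (c : ℕ → ℕ) (j : ℕ) : ∃ m : ℕ, pieceVal v c j = m := by
  classical
  refine ⟨(Finset.univ.filter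
    (fun b : Fin k => (c j ≤ (b:ℕ) ∧ (b:ℕ) < c (j+1)) ∧ v b = 1)).card, ?_⟩
  rw [← Finset.sum_boole]
  unfold pieceVal
  apply Finset.sum_congr rfl
  intro b _
  rcases hbin b with h | h <;> simp [h]

lemma lipR_term (a b b' t : ℝ) (hbb : b ≤ b') :
    max 0 (min b' (t+1) - max a t) - max 0 (min b (t+1) - max a t) ≤
      max 0 (min b' (t+1) - max b t) := by
  simp only [max_def, min_def]; split_ifs <;> linarith

lemma lipL_term (a a' b t : ℝ) (haa : a' ≤ a) :
    max 0 (min b (t+1) - max a' t) - max 0 (min b (t+1) - max a t) ≤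
      max 0 (min a (t+1) - max a' t) := by
  simp only [max_def, min_def]; split_ifs <;> linarith

lemma tele_term (l r : ℝ) (hlr : l ≤ r) (i : ℕ) :
    max 0 (min r ((i:ℝ)+1) - max l (i:ℝ)) =
      max l (min r ((i:ℝ)+1)) - max l (min r (i:ℝ)) := by
  simp only [max_def, min_def]; split_ifs <;> linarith

lemma sum_overlap (k : ℕ) (l r : ℝ) (hlr : l ≤ r) :
    ∑ i : Fin k, max 0 (min r ((i:ℝ)+1) - max l (i:ℝ)) ≤ r - l := by
  rw [Fin.sum_univ_eq_sum_range (fun i => max 0 (min r ((i:ℝ)+1) - max l (i:ℝ)))]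
  have : ∀ i ∈ Finset.range k, max 0 (min r ((i:ℝ)+1) - max l (i:ℝ)) =
      (fun j : ℕ => max l (min r (j:ℝ))) (i+1) - (fun j : ℕ => max l (min r (j:ℝ))) i := by
    intro i _
    rw [tele_term l r hlr i]; push_cast; ring_nf
  rw [Finset.sum_congr rfl this, Finset.sum_range_sub (fun j : ℕ => max l (min r (j:ℝ))) k]
  simp only [Nat.cast_zero]
  have h1 : max l (min r (k:ℝ)) ≤ r := max_le hlr (min_le_left _ _)
  have h2 : l ≤ max l (min r 0) := le_max_left _ _
  linarith

lemma contVal_lip_right {k : ℕ} (v : Fin k → ℝ) (hv0 : ∀ i, 0 ≤ v i) (hv1 : ∀ i, v i ≤ 1)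
    (a b b' : ℝ) (h : b ≤ b') : contVal v a b' ≤ contVal v a b + (b' - b) := by
  have key : ∀ i : Fin k,
      v i * max 0 (min b' ((i:ℝ)+1) - max a (i:ℝ)) ≤
      v i * max 0 (min b ((i:ℝ)+1) - max a (i:ℝ)) +
        max 0 (min b' ((i:ℝ)+1) - max b (i:ℝ)) := by
    intro i
    have hd : (0:ℝ) ≤ max 0 (min b' ((i:ℝ)+1) - max a (i:ℝ)) -
        max 0 (min b ((i:ℝ)+1) - max a (i:ℝ)) := by
      have := max_le_max (le_refl (0:ℝ))
        (sub_le_sub_right (min_le_min h (le_refl ((i:ℝ)+1))) (max a (i:ℝ)))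
      linarith
    have h1 := lipR_term a b b' (i:ℝ) h
    have h2 := mul_le_of_le_one_left hd (hv1 i)
    have h3 := hv0 i
    nlinarith [h2, h1]
  calc contVal v a b' ≤ ∑ i : Fin k, (v i * max 0 (min b ((i:ℝ)+1) - max a (i:ℝ)) +
        max 0 (min b' ((i:ℝ)+1) - max b (i:ℝ))) := Finset.sum_le_sum fun i _ => key i
    _ = contVal v a b + ∑ i : Fin k, max 0 (min b' ((i:ℝ)+1) - max b (i:ℝ)) := by
        rw [Finset.sum_add_distrib]; rfl
    _ ≤ contVal v a b + (b' - b) := by linarith [sum_overlap k b b' h]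

lemma contVal_lip_left {k : ℕ} (v : Fin k → ℝ) (hv0 : ∀ i, 0 ≤ v i) (hv1 : ∀ i, v i ≤ 1)
    (a a' b : ℝ) (h : a' ≤ a) : contVal v a' b ≤ contVal v a b + (a - a') := by
  have key : ∀ i : Fin k,
      v i * max 0 (min b ((i:ℝ)+1) - max a' (i:ℝ)) ≤
      v i * max 0 (min b ((i:ℝ)+1) - max a (i:ℝ)) +
        max 0 (min a ((i:ℝ)+1) - max a' (i:ℝ)) := by
    intro i
    have hd : (0:ℝ) ≤ max 0 (min b ((i:ℝ)+1) - max a' (i:ℝ)) -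
        max 0 (min b ((i:ℝ)+1) - max a (i:ℝ)) := by
      have := max_le_max (le_refl (0:ℝ))
        (sub_le_sub_left (max_le_max h (le_refl ((i:ℝ)))) (min b ((i:ℝ)+1)))
      linarith
    have h1 := lipL_term a a' b (i:ℝ) h
    have h2 := mul_le_of_le_one_left hd (hv1 i)
    have h3 := hv0 i
    nlinarith [h2, h1]
  calc contVal v a' b ≤ ∑ i : Fin k, (v i * max 0 (min b ((i:ℝ)+1) - max a (i:ℝ)) +
        max 0 (min a ((i:ℝ)+1) - max a' (i:ℝ))) := Finset.sum_le_sum fun i _ => key i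
    _ = contVal v a b + ∑ i : Fin k, max 0 (min a ((i:ℝ)+1) - max a' (i:ℝ)) := by
        rw [Finset.sum_add_distrib]; rfl
    _ ≤ contVal v a b + (a - a') := by linarith [sum_overlap k a' a h]

/-- with binary preferences (each bead worth `0` or `1` to each player),
assuming the associated continuous cake admits an envy-free division with `n - 1`
cuts, there is an allocation of the necklace into `n` contiguous intervals using
`n - 1` integer cuts that is `1`-envy-free. -/
theorem binary_preferences_one_envy_free
    (k n : ℕ) (hn : 0 < n) (v : Fin n → Fin k → ℝ)
    (hbin : ∀ P b, v P b = 0 ∨ v P b = 1)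
    -- the continuous cake admits an envy-free division with `n - 1` cuts:
    (hcont : ∃ x : ℕ → ℝ, (∀ i < n, x i ≤ x (i + 1)) ∧ x 0 = 0 ∧ x n = k ∧
      ∃ σ : Equiv.Perm (Fin n), ∀ P : Fin n, ∀ j : Fin n,
        contVal (v P) (x j) (x ((j : ℕ) + 1)) ≤
          contVal (v P) (x (σ P)) (x ((σ P : ℕ) + 1))) :
    ∃ c : ℕ → ℕ, (∀ i < n, c i ≤ c (i + 1)) ∧ c 0 = 0 ∧ c n = k ∧
      ∃ π : Equiv.Perm (Fin n), ∀ P : Fin n, ∀ j : Fin n,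
        pieceVal (v P) c j ≤ pieceVal (v P) c (π P) + 1 := by
  obtain ⟨x, hmono, hx0, hxn, σ, henv⟩ := hcont
  have hnn : ∀ i, i ≤ n → 0 ≤ x i := by
    intro i
    induction i with
    | zero => intro _; rw [hx0]
    | succ i ih =>
      intro h
      have hi : i < n := h
      exact le_trans (ih (le_of_lt hi)) (hmono i hi)
  set c : ℕ → ℕ := fun i => (⌊x (min i n) + 1/2⌋).toNat with hc
  have hcr : ∀ i, i ≤ n → ((c i : ℕ) : ℝ) = ((⌊x i + 1/2⌋ : ℤ) : ℝ) := by
    intro i hi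
    have hge : (0:ℤ) ≤ ⌊x i + 1/2⌋ := Int.floor_nonneg.2 (by linarith [hnn i hi])
    simp only [hc, min_eq_left hi]
    exact_mod_cast congrArg (Int.cast : ℤ → ℝ) (Int.toNat_of_nonneg hge)
  have hfl : ∀ i, i ≤ n → x i - 1/2 < (c i : ℝ) ∧ (c i : ℝ) ≤ x i + 1/2 := by
    intro i hi
    rw [hcr i hi]
    constructor
    · have := Int.sub_one_lt_floor (x i + 1/2); linarith
    · have := Int.floor_le (x i + 1/2); linarith
  have hcmono : ∀ i < n, c i ≤ c (i + 1) := by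
    intro i hi
    simp only [hc, min_eq_left (le_of_lt hi), min_eq_left (Nat.succ_le_of_lt hi)]
    exact Int.toNat_le_toNat (Int.floor_le_floor (by linarith [hmono i hi]))
  have hc0 : c 0 = 0 := by
    have h0 : ⌊x 0 + 1/2⌋ = 0 := by rw [hx0]; norm_num
    simp only [hc, Nat.min_eq_left (Nat.zero_le n), h0, Int.toNat_zero]
  have hcn : c n = k := by
    have h0 : ⌊x n + 1/2⌋ = (k : ℤ) := by
      rw [hxn, Int.floor_eq_iff]
      constructor <;> push_cast <;> linarith
    simp only [hc, min_self, h0, Int.toNat_natCast]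
  refine ⟨c, hcmono, hc0, hcn, σ, ?_⟩
  intro P j
  have hv0 : ∀ b, 0 ≤ v P b := by
    intro b; rcases hbin P b with h | h <;> rw [h] <;> norm_num
  have hv1 : ∀ b, v P b ≤ 1 := by
    intro b; rcases hbin P b with h | h <;> rw [h] <;> norm_num
  set m : Fin n := σ P with hm
  have hjn : (j : ℕ) ≤ n := le_of_lt j.isLt
  have hj1n : (j : ℕ) + 1 ≤ n := j.isLt
  have hmn : (m : ℕ) ≤ n := le_of_lt m.isLt
  have hm1n : (m : ℕ) + 1 ≤ n := m.isLt
  obtain ⟨haj1, haj2⟩ := hfl j hjn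
  obtain ⟨hbj1, hbj2⟩ := hfl ((j : ℕ) + 1) hj1n
  obtain ⟨ham1, ham2⟩ := hfl m hmn
  obtain ⟨hbm1, hbm2⟩ := hfl ((m : ℕ) + 1) hm1n
  set aj : ℝ := (c j : ℝ)
  set bj : ℝ := (c ((j : ℕ) + 1) : ℝ)
  set am : ℝ := (c m : ℝ)
  set bm : ℝ := (c ((m : ℕ) + 1) : ℝ)
  set xj : ℝ := x j
  set xj1 : ℝ := x ((j : ℕ) + 1)
  set xm : ℝ := x m
  set xm1 : ℝ := x ((m : ℕ) + 1)
  have chain1 : contVal (v P) aj bj ≤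
      contVal (v P) xj xj1 + ((xj - min aj xj) + (max bj xj1 - xj1)) := by
    have s1 : contVal (v P) aj bj ≤ contVal (v P) (min aj xj) bj :=
      contVal_anti_left _ hv0 _ _ _ (min_le_left _ _)
    have s2 : contVal (v P) (min aj xj) bj ≤ contVal (v P) (min aj xj) (max bj xj1) :=
      contVal_mono_right _ hv0 _ _ _ (le_max_left _ _)
    have s3 : contVal (v P) (min aj xj) (max bj xj1) ≤
        contVal (v P) xj (max bj xj1) + (xj - min aj xj) :=
      contVal_lip_left _ hv0 hv1 _ _ _ (min_le_right _ _)
    have s4 : contVal (v P) xj (max bj xj1) ≤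
        contVal (v P) xj xj1 + (max bj xj1 - xj1) :=
      contVal_lip_right _ hv0 hv1 _ _ _ (le_max_right _ _)
    linarith
  have chain2 : contVal (v P) xm xm1 ≤
      contVal (v P) am bm + ((am - min am xm) + (max bm xm1 - bm)) := by
    have s1 : contVal (v P) xm xm1 ≤ contVal (v P) (min am xm) xm1 :=
      contVal_anti_left _ hv0 _ _ _ (min_le_right _ _)
    have s2 : contVal (v P) (min am xm) xm1 ≤ contVal (v P) (min am xm) (max bm xm1) :=
      contVal_mono_right _ hv0 _ _ _ (le_max_right _ _)
    have s3 : contVal (v P) (min am xm) (max bm xm1) ≤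
        contVal (v P) am (max bm xm1) + (am - min am xm) :=
      contVal_lip_left _ hv0 hv1 _ _ _ (min_le_left _ _)
    have s4 : contVal (v P) am (max bm xm1) ≤
        contVal (v P) am bm + (max bm xm1 - bm) :=
      contVal_lip_right _ hv0 hv1 _ _ _ (le_max_left _ _)
    linarith
  have e1 : xj - min aj xj < 1/2 := by
    have : xj - 1/2 < min aj xj := lt_min (by linarith) (by linarith)
    linarith
  have e2 : max bj xj1 - xj1 ≤ 1/2 := by
    have : max bj xj1 ≤ xj1 + 1/2 := max_le (by linarith) (by linarith)
    linarith
  have e3 : am - min am xm ≤ 1/2 := by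
    have : am - 1/2 ≤ min am xm := le_min (by linarith) (by linarith)
    linarith
  have e4 : max bm xm1 - bm < 1/2 := by
    have : max bm xm1 < bm + 1/2 := max_lt (by linarith) (by linarith)
    linarith
  have hstrict : pieceVal (v P) c j < pieceVal (v P) c m + 2 := by
    rw [pieceVal_eq_contVal, pieceVal_eq_contVal]
    have := henv P j
    linarith
  obtain ⟨Nj, hNj⟩ := pieceVal_int (v P) (hbin P) c j
  obtain ⟨Nm, hNm⟩ := pieceVal_int (v P) (hbin P) c m
  rw [hNj, hNm] at hstrict ⊢
  have h1 : Nj < Nm + 2 := by exact_mod_cast hstrict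
  have h2 : Nj ≤ Nm + 1 := by omega
  exact_mod_cast h2
end

section
/- Rounding each cut of an envy-free division of a continuous cake to the nearest integer point (rounding half-integer cuts consistently to the right) changes each player's value of each piece by strictly less than s, where s bounds the value of any unit interval to any player; consequently the resulting integral division has maximum envy strictly less than 2s. -/
/-- Rounding to the nearest integer, sending half-integers up. -/
noncomputable def roundHalfUp (x : ℝ) : ℤ := ⌊x + 1 / 2⌋

lemma scalar1 (a b c : ℝ) (hab : a ≤ b) :
    max 0 (min b (c+1) - max a c) = (min b (c+1) - min a (c+1)) - (min b c - min a c) := by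
  simp only [min_def, max_def]
  split_ifs <;> linarith

lemma scalar2 (a b c d : ℝ) (hab : a ≤ b) (hcd : c ≤ d) :
    min b c - min a c ≤ min b d - min a d := by
  simp only [min_def]
  split_ifs <;> linarith

lemma contVal_eq {k : ℕ} (v : Fin k → ℝ) {a b : ℝ} (hab : a ≤ b) :
    contVal v a b = ∑ i : Fin k,
      v i * ((min b ((i:ℝ)+1) - min a ((i:ℝ)+1)) - (min b (i:ℝ) - min a (i:ℝ))) := by
  unfold contVal
  exact Finset.sum_congr rfl fun i _ => by rw [scalar1 a b (i:ℝ) hab]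

lemma contVal_nonneg {k : ℕ} (v : Fin k → ℝ) (hv0 : ∀ i, 0 ≤ v i) (a b : ℝ) :
    0 ≤ contVal v a b := by
  unfold contVal
  exact Finset.sum_nonneg fun i _ => mul_nonneg (hv0 i) (le_max_left _ _)

lemma contVal_le {k : ℕ} (v : Fin k → ℝ) (s : ℝ) (hs : 0 ≤ s)
    (hvs : ∀ i, v i ≤ s) {a b : ℝ} (hab : a ≤ b) :
    contVal v a b ≤ s * (b - a) := by
  rw [contVal_eq v hab]
  have h1 : ∀ i : Fin k,
      v i * ((min b ((i:ℝ)+1) - min a ((i:ℝ)+1)) - (min b (i:ℝ) - min a (i:ℝ))) ≤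
      s * ((min b ((i:ℝ)+1) - min a ((i:ℝ)+1)) - (min b (i:ℝ) - min a (i:ℝ))) := by
    intro i
    have hnn : 0 ≤ (min b ((i:ℝ)+1) - min a ((i:ℝ)+1)) - (min b (i:ℝ) - min a (i:ℝ)) := by
      have := scalar2 a b (i:ℝ) ((i:ℝ)+1) hab (by linarith)
      linarith
    exact mul_le_mul_of_nonneg_right (hvs i) hnn
  calc _ ≤ ∑ i : Fin k,
      s * ((min b ((i:ℝ)+1) - min a ((i:ℝ)+1)) - (min b (i:ℝ) - min a (i:ℝ))) :=
        Finset.sum_le_sum fun i _ => h1 i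
    _ = s * ∑ i : Fin k,
      ((min b ((i:ℝ)+1) - min a ((i:ℝ)+1)) - (min b (i:ℝ) - min a (i:ℝ))) := by
        rw [Finset.mul_sum]
    _ ≤ s * (b - a) := by
        apply mul_le_mul_of_nonneg_left _ hs
        have : ∑ i : Fin k,
            ((min b ((i:ℝ)+1) - min a ((i:ℝ)+1)) - (min b (i:ℝ) - min a (i:ℝ))) =
            (min b (k:ℝ) - min a (k:ℝ)) - (min b 0 - min a 0) := by
          rw [Fin.sum_univ_eq_sum_range
            (fun i => ((min b ((i:ℝ)+1) - min a ((i:ℝ)+1)) - (min b (i:ℝ) - min a (i:ℝ))))]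
          have := Finset.sum_range_sub (fun i : ℕ => min b (i:ℝ) - min a (i:ℝ)) k
          simpa using this
        rw [this]
        have h2 : min b (k:ℝ) - min a (k:ℝ) ≤ b - a := by
          simp only [min_def]; split_ifs <;> linarith
        have h3 : 0 ≤ min b 0 - min a 0 := by
          simp only [min_def]; split_ifs <;> linarith
        linarith

/-- Cumulative value: contVal v a b = Gval v b - Gval v a when a ≤ b. -/
noncomputable def Gval {k : ℕ} (v : Fin k → ℝ) (t : ℝ) : ℝ :=
  ∑ i : Fin k, v i * (min t ((i:ℝ)+1) - min t (i:ℝ))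

lemma contVal_G {k : ℕ} (v : Fin k → ℝ) {a b : ℝ} (hab : a ≤ b) :
    contVal v a b = Gval v b - Gval v a := by
  rw [contVal_eq v hab]
  unfold Gval
  rw [← Finset.sum_sub_distrib]
  exact Finset.sum_congr rfl fun i _ => by ring

lemma roundHU_le (t : ℝ) : (roundHalfUp t : ℝ) ≤ t + 1/2 := Int.floor_le _

lemma lt_round (t : ℝ) : t - 1/2 < (roundHalfUp t : ℝ) := by
  have := Int.sub_one_lt_floor (t + 1/2)
  unfold roundHalfUp
  linarith

lemma roundMono {a b : ℝ} (hab : a ≤ b) : roundHalfUp a ≤ roundHalfUp b :=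
  Int.floor_le_floor (by linarith)

/-- Key bounds on the change of cumulative value at a rounded point. -/
lemma Gdelta {k : ℕ} (v : Fin k → ℝ) (s : ℝ) (hs : 0 < s)
    (hv0 : ∀ i, 0 ≤ v i) (hvs : ∀ i, v i ≤ s) (t : ℝ) :
    -(s/2) < Gval v (roundHalfUp t : ℝ) - Gval v t ∧
      Gval v (roundHalfUp t : ℝ) - Gval v t ≤ s/2 := by
  set r : ℝ := (roundHalfUp t : ℝ) with hr
  rcases le_total t r with h | h
  · have h0 : 0 ≤ Gval v r - Gval v t := by
      rw [← contVal_G v h]; exact contVal_nonneg v hv0 t r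
    have h1 : Gval v r - Gval v t ≤ s * (r - t) := by
      rw [← contVal_G v h]; exact contVal_le v s hs.le hvs h
    have h2 : r - t ≤ 1/2 := by have := roundHU_le t; linarith
    constructor
    · linarith
    · nlinarith
  · have h0 : 0 ≤ Gval v t - Gval v r := by
      rw [← contVal_G v h]; exact contVal_nonneg v hv0 r t
    have h1 : Gval v t - Gval v r ≤ s * (t - r) := by
      rw [← contVal_G v h]; exact contVal_le v s hs.le hvs h
    have h2 : t - r < 1/2 := by have := lt_round t; linarith
    constructor
    · nlinarith
    · linarith

/-- rounding each cut of an envy-free division of the continuous cake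
`[0, k]` to the nearest integer (half-integers rounding up) changes each player's
value of each piece by strictly less than `s`, where each unit interval is worth at
most `s` to each player; consequently the resulting integral division has maximum
envy strictly less than `2 * s`. -/
theorem rounding_cuts_envy_lt_two_s
    (k n : ℕ) (hn : 0 < n) (s : ℝ) (hs : 0 < s)
    (v : Fin n → Fin k → ℝ)
    (hv0 : ∀ P i, 0 ≤ v P i) (hvs : ∀ P i, v P i ≤ s)
    (x : ℕ → ℝ) (hx : ∀ i < n, x i ≤ x (i + 1)) (hx0 : x 0 = 0) (hxn : x n = k)
    (σ : Equiv.Perm (Fin n))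
    (hEF : ∀ P : Fin n, ∀ j : Fin n,
      contVal (v P) (x j) (x ((j : ℕ) + 1)) ≤
        contVal (v P) (x (σ P)) (x ((σ P : ℕ) + 1))) :
    (∀ P : Fin n, ∀ j : Fin n,
      |contVal (v P) (roundHalfUp (x j) : ℝ) (roundHalfUp (x ((j : ℕ) + 1)) : ℝ) -
        contVal (v P) (x j) (x ((j : ℕ) + 1))| < s) ∧
    (∀ P : Fin n, ∀ j : Fin n,
      contVal (v P) (roundHalfUp (x j) : ℝ) (roundHalfUp (x ((j : ℕ) + 1)) : ℝ) <
        contVal (v P) (roundHalfUp (x (σ P)) : ℝ)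
          (roundHalfUp (x ((σ P : ℕ) + 1)) : ℝ) + 2 * s) := by
  have key : ∀ P : Fin n, ∀ j : Fin n,
      |contVal (v P) (roundHalfUp (x j) : ℝ) (roundHalfUp (x ((j : ℕ) + 1)) : ℝ) -
        contVal (v P) (x j) (x ((j : ℕ) + 1))| < s := by
    intro P j
    have hab : x j ≤ x ((j : ℕ) + 1) := hx j j.isLt
    have hrr : (roundHalfUp (x j) : ℝ) ≤ (roundHalfUp (x ((j : ℕ) + 1)) : ℝ) := by
      exact_mod_cast roundMono hab
    rw [contVal_G (v P) hab, contVal_G (v P) hrr]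
    obtain ⟨ha1, ha2⟩ := Gdelta (v P) s hs (hv0 P) (hvs P) (x j)
    obtain ⟨hb1, hb2⟩ := Gdelta (v P) s hs (hv0 P) (hvs P) (x ((j : ℕ) + 1))
    rw [abs_lt]
    constructor <;> linarith
  refine ⟨key, fun P j => ?_⟩
  have h1 := key P j
  have h2 := key P (σ P)
  have h3 := hEF P j
  rw [abs_lt] at h1 h2
  obtain ⟨h1a, h1b⟩ := h1
  obtain ⟨h2a, h2b⟩ := h2
  linarith
end
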